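/- Let G be a finite median graph with the following property: for every three pairwise distinct, pairwise compatible convex splits s0, s1, s2 of G there exists an induced path in the incompatibility graph Inc(G) from s1 to s2 that contains no split incompatible with s0. Then G is a simplex graph; more precisely, there exists a finite graph F such that G is isomorphic to the simplex graph κ(F) and Inc(G) is isomorphic to F. -/

import Mathlib

open SimpleGraph

/-- The metric interval between `u` and `v` in a graph `G`. -/
def gInterval {V : Type} (G : SimpleGraph V) (u v : V) : Set V :=
  {z | G.dist u z + G.dist z v = G.dist u v}

/-- `G` is a median graph: it is connected and every triple of vertices has a
unique median. -/
def IsMedianGraph {V : Type} (G : SimpleGraph V) : Prop :=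
  G.Connected ∧ ∀ u v w : V,
    ∃! m : V, m ∈ gInterval G u v ∧ m ∈ gInterval G v w ∧ m ∈ gInterval G u w

/-- A set of vertices is convex if it contains the interval between any two of
its elements. -/
def IsConvexSet {V : Type} (G : SimpleGraph V) (S : Set V) : Prop :=
  ∀ u ∈ S, ∀ v ∈ S, gInterval G u v ⊆ S

/-- A convex split of `G` is an unordered pair `{A, B}` of nonempty convex sets
partitioning the vertex set. -/
def IsConvexSplit {V : Type} (G : SimpleGraph V) (P : Set (Set V)) : Prop :=
  ∃ A B : Set V, P = {A, B} ∧ A.Nonempty ∧ B.Nonempty ∧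
    IsConvexSet G A ∧ IsConvexSet G B ∧ A ∪ B = Set.univ ∧ Disjoint A B

/-- Two splits are incompatible when all four pairwise intersections of their
parts are nonempty. -/
def SplitsIncompatible {V : Type} (P Q : Set (Set V)) : Prop :=
  ∀ A ∈ P, ∀ B ∈ Q, (A ∩ B : Set V).Nonempty

/-- The incompatibility graph of the convex splits of `G`. -/
def IncGraph {V : Type} (G : SimpleGraph V) :
    SimpleGraph {P : Set (Set V) // IsConvexSplit G P} :=
  SimpleGraph.fromRel (fun P Q => SplitsIncompatible P.1 Q.1)

/-- The simplex graph `κ(F)` of a graph `F`: vertices are the cliques of `F`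
(including the empty clique), two cliques being adjacent iff one is obtained
from the other by adding a single vertex. -/
def simplexGraph {α : Type} (F : SimpleGraph α) :
    SimpleGraph {s : Finset α // F.IsClique (s : Set α)} :=
  SimpleGraph.fromRel (fun s t =>
    ∃ a : α, a ∉ s.1 ∧ (t.1 : Set α) = insert a (s.1 : Set α))

/-- A walk is an induced path if it is a path and it contains every edge of the
graph joining two of its vertices (it has no chords). -/
def IsInducedPath {V : Type} {G : SimpleGraph V} {u v : V} (p : G.Walk u v) :
    Prop :=
  p.IsPath ∧ ∀ a ∈ p.support, ∀ b ∈ p.support, G.Adj a b → s(a, b) ∈ p.edges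

/-!
In a median graph the halfspace `W(a, b) = {x | d(x, a) < d(x, b)}` of an edge `ab` is convex:
a vertex of `I(x, y) \ W(a, b)` with `x, y ∈ W(a, b)` would, by induction on `d(x, y)`, be a
common neighbour of `x` and `y`, and then two distinct medians of `x, y, b` appear. Hence every
convex split separating `a` from `b` is `{W(a, b), W(b, a)}`; adjacent vertices are separated by
exactly one split, and vertices at distance at least two by at least two.

For distinct compatible splits `P` and `Q` exactly one side of `P` is disjoint from a side of `Q`.
This avoided side of `P` cannot change along an edge of `Inc(G)`, so by the hypothesis it is the
same for all splits compatible with `P`. The Helly property of convex sets in a median graph gives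
a vertex `v₀` outside all avoided sides; then the splits separating `v₀` from any vertex are
pairwise incompatible, and `v ↦ {splits separating v₀ and v}` is an isomorphism of `G` onto
`κ(Inc(G))`, surjective by the Helly property once more.
-/

variable {V : Type} {G : SimpleGraph V}

theorem mem_gInterval {u v z : V} :
    z ∈ gInterval G u v ↔ G.dist u z + G.dist z v = G.dist u v :=
  Iff.rfl

theorem mem_gInterval_comm {u v z : V} : z ∈ gInterval G u v ↔ z ∈ gInterval G v u := by
  rw [mem_gInterval, mem_gInterval, G.dist_comm (u := u) (v := v), G.dist_comm (u := u) (v := z),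
    G.dist_comm (u := z) (v := v), add_comm]

namespace SimpleGraph.Connected

theorem gInterval_of_adj (hG : G.Connected) {a b : V} (hab : G.Adj a b) :
    gInterval G a b = {a, b} := by
  ext z
  simp only [mem_gInterval, dist_eq_one_iff_adj.2 hab, Set.mem_insert_iff,
    Set.mem_singleton_iff]
  constructor
  · intro h
    rcases Nat.eq_zero_or_pos (G.dist a z) with h0 | h0
    · exact .inl (hG.dist_eq_zero_iff.1 h0).symm
    · exact .inr (hG.dist_eq_zero_iff.1 (by omega))
  · rintro (rfl | rfl) <;> simp [hab]

theorem mem_gInterval_trans (hG : G.Connected) {x y z m : V} (hz : z ∈ gInterval G x y)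
    (hm : m ∈ gInterval G z y) : m ∈ gInterval G x y ∧ z ∈ gInterval G x m := by
  simp only [mem_gInterval] at *
  have := hG.dist_triangle (u := x) (v := z) (w := m)
  have := hG.dist_triangle (u := x) (v := m) (w := y)
  omega

theorem exists_adj_dist_add_one (hG : G.Connected) {u v : V} (hne : u ≠ v) :
    ∃ w, G.Adj u w ∧ G.dist w v + 1 = G.dist u v := by
  obtain ⟨p, hp⟩ := hG.exists_walk_length_eq_dist u v
  cases p with
  | nil => exact absurd rfl hne
  | @cons _ w _ h q =>
    refine ⟨w, h, le_antisymm ?_ ?_⟩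
    · simpa [← hp] using dist_le q
    · have := hG.dist_triangle (u := u) (v := w) (w := v)
      rwa [dist_eq_one_iff_adj.2 h, add_comm] at this

end SimpleGraph.Connected

def halfspace (G : SimpleGraph V) (a b : V) : Set V := {x | G.dist x a < G.dist x b}

theorem mem_halfspace {a b x : V} : x ∈ halfspace G a b ↔ G.dist x a < G.dist x b :=
  Iff.rfl

theorem gInterval_subset_halfspace (hG : G.Connected) {a b x : V} (hx : x ∈ halfspace G a b) :
    gInterval G x a ⊆ halfspace G a b := by
  intro v hv
  rw [mem_gInterval] at hv
  rw [mem_halfspace] at *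
  have := hG.dist_triangle (u := x) (v := v) (w := b)
  omega

theorem self_mem_halfspace {a b : V} (hab : G.Adj a b) : a ∈ halfspace G a b := by
  simp [mem_halfspace, dist_eq_one_iff_adj.2 hab]

theorem notMem_halfspace_self {a b : V} : b ∉ halfspace G a b := by
  simp [mem_halfspace]

theorem IsConvexSet.inter {A B : Set V} (hA : IsConvexSet G A) (hB : IsConvexSet G B) :
    IsConvexSet G (A ∩ B) :=
  fun u hu v hv => Set.subset_inter (hA u hu.1 v hv.1) (hB u hu.2 v hv.2)

namespace IsMedianGraph

variable {a b x y z w : V}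

theorem dist_eq_add_one_or_of_adj (hG : IsMedianGraph G) (hab : G.Adj a b) (v : V) :
    G.dist v b = G.dist v a + 1 ∨ G.dist v a = G.dist v b + 1 := by
  obtain ⟨m, ⟨hm_va, hm_ab, hm_vb⟩, -⟩ := hG.2 v a b
  have hab1 := dist_eq_one_iff_adj.2 hab
  have := hG.1.dist_triangle (u := v) (v := a) (w := b)
  have := hG.1.dist_triangle (u := v) (v := b) (w := a)
  have hba1 : G.dist b a = 1 := dist_eq_one_iff_adj.2 hab.symm
  rw [hG.1.gInterval_of_adj hab] at hm_ab
  rw [mem_gInterval] at hm_va hm_vb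
  rcases hm_ab with rfl | rfl <;> simp only [dist_self] at hm_va hm_vb <;> omega

theorem mem_halfspace_iff (hG : IsMedianGraph G) (hab : G.Adj a b) :
    x ∈ halfspace G a b ↔ G.dist x b = G.dist x a + 1 := by
  have := hG.dist_eq_add_one_or_of_adj hab x
  rw [mem_halfspace]
  omega

theorem notMem_halfspace_iff (hG : IsMedianGraph G) (hab : G.Adj a b) :
    x ∉ halfspace G a b ↔ G.dist x a = G.dist x b + 1 := by
  have := hG.dist_eq_add_one_or_of_adj hab x
  rw [mem_halfspace]
  omega

theorem compl_halfspace (hG : IsMedianGraph G) (hab : G.Adj a b) :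
    (halfspace G a b)ᶜ = halfspace G b a := by
  ext x
  rw [Set.mem_compl_iff, hG.notMem_halfspace_iff hab, hG.mem_halfspace_iff hab.symm]

theorem dist_eq_add_one_of_adj_of_notMem_halfspace (hG : IsMedianGraph G) (hab : G.Adj a b)
    (hx : x ∈ halfspace G a b) (hz : z ∉ halfspace G a b) (hxz : G.Adj x z) :
    G.dist z a = G.dist x a + 1 ∧ G.dist z b = G.dist x a := by
  rw [hG.mem_halfspace_iff hab] at hx
  rw [hG.notMem_halfspace_iff hab] at hz
  have h1 := hG.dist_eq_add_one_or_of_adj hxz a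
  have h2 := hG.dist_eq_add_one_or_of_adj hxz b
  simp only [G.dist_comm (v := x), G.dist_comm (v := z)] at h1 h2
  omega

theorem eq_of_adj_of_adj_of_notMem_halfspace (hG : IsMedianGraph G) (hab : G.Adj a b)
    (hx : x ∈ halfspace G a b) (hy : y ∈ halfspace G a b) (hz : z ∉ halfspace G a b)
    (hxz : G.Adj x z) (hyz : G.Adj y z) : x = y := by
  by_contra hxy
  obtain ⟨hzx, hzbx⟩ := hG.dist_eq_add_one_of_adj_of_notMem_halfspace hab hx hz hxz
  obtain ⟨hzy, hzby⟩ := hG.dist_eq_add_one_of_adj_of_notMem_halfspace hab hy hz hyz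
  have hxb := (hG.mem_halfspace_iff hab).1 hx
  have hyb := (hG.mem_halfspace_iff hab).1 hy
  have hdxy : G.dist x y = 2 := by
    have := hG.dist_eq_add_one_or_of_adj hyz.symm x
    have := hG.1.dist_eq_zero_iff.not.2 hxy
    simp only [dist_eq_one_iff_adj.2 hxz] at *
    omega
  obtain ⟨p, ⟨hp_xy, hp_ya, hp_xa⟩, -⟩ := hG.2 x y a
  obtain ⟨m, -, hm⟩ := hG.2 x y b
  simp only [mem_gInterval] at hp_xy hp_ya hp_xa
  have hpb : G.dist p b = G.dist x a := by
    have := hG.1.dist_triangle (u := x) (v := p) (w := b)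
    have := hG.1.dist_triangle (u := p) (v := a) (w := b)
    simp only [dist_eq_one_iff_adj.2 hab, G.dist_comm (v := p)] at *
    omega
  have hpz : p = z := by
    have hzx1 := dist_eq_one_iff_adj.2 hxz
    have hzy1 := dist_eq_one_iff_adj.2 hyz.symm
    have := G.dist_comm (u := p) (v := y)
    have := G.dist_comm (u := z) (v := y)
    rw [hm p, hm z] <;> refine ⟨?_, ?_, ?_⟩ <;> rw [mem_gInterval] <;> omega
  subst hpz
  omega

theorem mem_gInterval_of_notMem_halfspace (hG : IsMedianGraph G) {n : ℕ}
    (ih : ∀ x' ∈ halfspace G a b, ∀ y' ∈ halfspace G a b, G.dist x' y' < n →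
      gInterval G x' y' ⊆ halfspace G a b)
    (hx : x ∈ halfspace G a b) (hy : y ∈ halfspace G a b) (hxy : G.dist x y ≤ n)
    (hw : w ∈ gInterval G x y) (hwW : w ∉ halfspace G a b) : y ∈ gInterval G w a := by
  obtain ⟨m, ⟨hm_wy, hm_ya, hm_wa⟩, -⟩ := hG.2 w y a
  obtain ⟨hm_xy, hw_xm⟩ := hG.1.mem_gInterval_trans hw hm_wy
  by_cases hmy : m = y
  · exact hmy ▸ hm_wa
  refine absurd (ih x hx m (gInterval_subset_halfspace hG.1 hy hm_ya) ?_ hw_xm) hwW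
  have := hG.1.dist_eq_zero_iff.not.2 hmy
  rw [mem_gInterval] at hm_xy
  omega

theorem dist_eq_one_of_mem_gInterval_of_notMem_halfspace (hG : IsMedianGraph G)
    (hab : G.Adj a b) {n : ℕ}
    (ih : ∀ x' ∈ halfspace G a b, ∀ y' ∈ halfspace G a b, G.dist x' y' < n →
      gInterval G x' y' ⊆ halfspace G a b)
    (hx : x ∈ halfspace G a b) (hy : y ∈ halfspace G a b) (hxy : G.dist x y ≤ n)
    (hw : w ∈ gInterval G x y) (hwW : w ∉ halfspace G a b) : G.dist w y = 1 := by
  have hyx : G.dist y x ≤ n := G.dist_comm ▸ hxy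
  have hy_wa := hG.mem_gInterval_of_notMem_halfspace ih hx hy hxy hw hwW
  have hx_wa := hG.mem_gInterval_of_notMem_halfspace ih hy hx hyx
    (mem_gInterval_comm.1 hw) hwW
  obtain ⟨t, ⟨ht_wy, ht_yb, ht_wb⟩, -⟩ := hG.2 w y b
  obtain ⟨ht_xy, hw_xt⟩ := hG.1.mem_gInterval_trans hw ht_wy
  have hwa := (hG.notMem_halfspace_iff hab).1 hwW
  have hyb := (hG.mem_halfspace_iff hab).1 hy
  simp only [mem_gInterval] at *
  have hty : G.dist y t = 1 := by
    have := G.dist_comm (u := t) (v := y)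
    omega
  by_cases htW : t ∈ halfspace G a b
  · exact absurd (ih x hx t htW (by omega) hw_xt) hwW
  obtain ⟨hta, -⟩ :=
    hG.dist_eq_add_one_of_adj_of_notMem_halfspace hab hy htW (dist_eq_one_iff_adj.1 hty)
  have hx_ta := hG.mem_gInterval_of_notMem_halfspace ih hy hx hyx
    (mem_gInterval_comm.1 ht_xy) htW
  rw [mem_gInterval] at hx_ta
  have := G.dist_comm (u := t) (v := x)
  have := G.dist_comm (u := w) (v := x)
  have := G.dist_comm (u := t) (v := y)
  omega

theorem isConvexSet_halfspace (hG : IsMedianGraph G) (hab : G.Adj a b) :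
    IsConvexSet G (halfspace G a b) := by
  suffices ∀ n, ∀ x ∈ halfspace G a b, ∀ y ∈ halfspace G a b, G.dist x y < n →
      gInterval G x y ⊆ halfspace G a b from
    fun x hx y hy => this _ x hx y hy (Nat.lt_succ_self _)
  intro n
  induction n with
  | zero => simp
  | succ n ih =>
    intro x hx y hy hxy w hw
    by_contra hwW
    have hwy := hG.dist_eq_one_of_mem_gInterval_of_notMem_halfspace hab ih hx hy
      (by omega) hw hwW
    have hwx := hG.dist_eq_one_of_mem_gInterval_of_notMem_halfspace hab ih hy hx
      (by rw [G.dist_comm]; omega) (mem_gInterval_comm.1 hw) hwW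
    obtain rfl := hG.eq_of_adj_of_adj_of_notMem_halfspace hab hx hy hwW
      (dist_eq_one_iff_adj.1 hwx).symm (dist_eq_one_iff_adj.1 hwy).symm
    rw [mem_gInterval, dist_self, G.dist_comm, hwy] at hw
    omega

theorem inter_inter_nonempty (hG : IsMedianGraph G) {A B C : Set V} (hA : IsConvexSet G A)
    (hB : IsConvexSet G B) (hC : IsConvexSet G C) (hAB : (A ∩ B).Nonempty)
    (hBC : (B ∩ C).Nonempty) (hAC : (A ∩ C).Nonempty) : (A ∩ B ∩ C).Nonempty := by
  obtain ⟨x, hxB, hxC⟩ := hBC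
  obtain ⟨y, hyA, hyC⟩ := hAC
  obtain ⟨z, hzA, hzB⟩ := hAB
  obtain ⟨m, ⟨hm_xy, hm_yz, hm_xz⟩, -⟩ := hG.2 x y z
  exact ⟨m, ⟨hA y hyA z hzA hm_yz, hB x hxB z hzB hm_xz⟩, hC x hxC y hyC hm_xy⟩

theorem helly_theorem {ι : Type*} (hG : IsMedianGraph G) (s : Finset ι) (f : ι → Set V)
    (hf : ∀ i ∈ s, IsConvexSet G (f i)) (hpair : ∀ i ∈ s, ∀ j ∈ s, (f i ∩ f j).Nonempty) :
    ∃ x, ∀ i ∈ s, x ∈ f i := by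
  classical
  induction s using Finset.induction_on generalizing f with
  | empty => exact ⟨hG.1.nonempty.some, by simp⟩
  | insert a s _ ih =>
    simp only [Finset.mem_insert, forall_eq_or_imp] at hf hpair ⊢
    rcases s.eq_empty_or_nonempty with rfl | ⟨i₀, hi₀⟩
    · obtain ⟨x, hx, -⟩ := hpair.1.1
      exact ⟨x, hx, by simp⟩
    obtain ⟨x, hx⟩ := ih (fun i => f i ∩ f a) (fun i hi => (hf.2 i hi).inter hf.1)
      fun i hi j hj => by
        simpa only [Set.inter_right_comm _ (f a), Set.inter_assoc, Set.inter_self] using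
          hG.inter_inter_nonempty (hf.2 i hi) (hf.2 j hj) hf.1 ((hpair.2 i hi).2 j hj)
            (Set.inter_comm _ _ ▸ (hpair.1.2 j hj)) (Set.inter_comm _ _ ▸ (hpair.1.2 i hi))
    exact ⟨x, (hx i₀ hi₀).2, fun i hi => (hx i hi).1⟩

end IsMedianGraph

theorem isConvexSplit_iff {P : Set (Set V)} :
    IsConvexSplit G P ↔ ∃ A : Set V, P = {A, Aᶜ} ∧ A.Nonempty ∧ Aᶜ.Nonempty ∧
      IsConvexSet G A ∧ IsConvexSet G Aᶜ := by
  constructor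
  · rintro ⟨A, B, rfl, hA, hB, hAc, hBc, hU, hD⟩
    obtain rfl : Aᶜ = B := (IsCompl.of_eq (disjoint_iff.1 hD) hU).compl_eq
    exact ⟨A, rfl, hA, hB, hAc, hBc⟩
  · rintro ⟨A, rfl, hA, hAc, hAcv, hAccv⟩
    exact ⟨A, Aᶜ, rfl, hA, hAc, hAcv, hAccv, Set.union_compl_self A, disjoint_compl_right⟩

def Separates (P : Set (Set V)) (u v : V) : Prop := ∃ A ∈ P, u ∈ A ∧ v ∉ A

theorem not_separates_self {P : Set (Set V)} {u : V} : ¬ Separates P u u :=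
  fun ⟨_, _, hu, hu'⟩ => hu' hu

theorem not_splitsIncompatible_iff {P Q : Set (Set V)} :
    ¬ SplitsIncompatible P Q ↔ ∃ A ∈ P, ∃ B ∈ Q, Disjoint A B := by
  simp [SplitsIncompatible, Set.not_nonempty_iff_eq_empty, Set.disjoint_iff_inter_eq_empty]

theorem SplitsIncompatible.symm {P Q : Set (Set V)} (h : SplitsIncompatible P Q) :
    SplitsIncompatible Q P :=
  fun A hA B hB => Set.inter_comm A B ▸ h B hB A hA

namespace IsConvexSplit

variable {P Q Q' : Set (Set V)} {A A' B C C' : Set V} {u v w : V}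

theorem eq_pair_compl (hP : IsConvexSplit G P) (hA : A ∈ P) : P = {A, Aᶜ} := by
  obtain ⟨A₀, rfl, -⟩ := isConvexSplit_iff.1 hP
  rcases hA with rfl | rfl
  · rfl
  · rw [compl_compl, Set.pair_comm]

theorem mem_iff (hP : IsConvexSplit G P) (hA : A ∈ P) : B ∈ P ↔ B = A ∨ B = Aᶜ := by
  rw [hP.eq_pair_compl hA]
  rfl

theorem compl_mem (hP : IsConvexSplit G P) (hA : A ∈ P) : Aᶜ ∈ P :=
  (hP.mem_iff hA).2 (.inr rfl)

theorem nonempty (hP : IsConvexSplit G P) (hA : A ∈ P) : A.Nonempty := by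
  obtain ⟨A₀, rfl, hA₀, hA₀c, -⟩ := isConvexSplit_iff.1 hP
  rcases hA with rfl | rfl
  exacts [hA₀, hA₀c]

theorem isConvexSet (hP : IsConvexSplit G P) (hA : A ∈ P) : IsConvexSet G A := by
  obtain ⟨A₀, rfl, -, -, hA₀, hA₀c⟩ := isConvexSplit_iff.1 hP
  rcases hA with rfl | rfl
  exacts [hA₀, hA₀c]

theorem exists_mem (hP : IsConvexSplit G P) : ∃ A, A ∈ P := by
  obtain ⟨A, rfl, -⟩ := isConvexSplit_iff.1 hP
  exact ⟨A, .inl rfl⟩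

theorem ne_compl (hP : IsConvexSplit G P) (hA : A ∈ P) : A ≠ Aᶜ := by
  obtain ⟨x, hx⟩ := hP.nonempty hA
  exact fun h => (h ▸ hx : x ∈ Aᶜ) hx

theorem exists_mem_mem (hP : IsConvexSplit G P) (v : V) : ∃ A ∈ P, v ∈ A := by
  obtain ⟨A, hA⟩ := hP.exists_mem
  by_cases hv : v ∈ A
  exacts [⟨A, hA, hv⟩, ⟨Aᶜ, hP.compl_mem hA, hv⟩]

theorem separates_iff (hP : IsConvexSplit G P) (hA : A ∈ P) :
    Separates P u v ↔ (u ∈ A ↔ v ∉ A) := by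
  constructor
  · rintro ⟨B, hB, hu, hv⟩
    rcases (hP.mem_iff hA).1 hB with rfl | rfl
    · tauto
    · rw [Set.mem_compl_iff] at hu hv
      tauto
  · intro h
    by_cases hu : u ∈ A
    · exact ⟨A, hA, hu, h.1 hu⟩
    · exact ⟨Aᶜ, hP.compl_mem hA, hu, fun hv => hu (h.2 hv)⟩

theorem separates_comm (hP : IsConvexSplit G P) : Separates P u v ↔ Separates P v u := by
  obtain ⟨A, hA⟩ := hP.exists_mem
  rw [hP.separates_iff hA, hP.separates_iff hA]
  tauto

theorem separates_iff_xor (hP : IsConvexSplit G P) (w : V) :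
    Separates P u v ↔ (Separates P w u ↔ ¬ Separates P w v) := by
  obtain ⟨A, hA⟩ := hP.exists_mem
  simp only [hP.separates_iff hA]
  tauto

theorem setOf_separates_iff_mem (hP : IsConvexSplit G P) (u : V) (p : Prop) :
    {v | Separates P u v ↔ p} ∈ P := by
  obtain ⟨A, hA, huA⟩ := hP.exists_mem_mem u
  by_cases hp : p <;> [convert hP.compl_mem hA using 1; convert hA using 1] <;> ext v <;>
    simp [hp, hP.separates_iff hA, huA]

theorem eq_of_disjoint_of_splitsIncompatible (hP : IsConvexSplit G P)
    (hQQ' : SplitsIncompatible Q Q') (hA : A ∈ P) (hA' : A' ∈ P) (hC : C ∈ Q) (hC' : C' ∈ Q')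
    (h : Disjoint A C) (h' : Disjoint A' C') : A = A' := by
  refine ((hP.mem_iff hA).1 hA').elim Eq.symm fun hA'c => ?_
  subst hA'c
  obtain ⟨x, hxC, hxC'⟩ := hQQ' C hC C' hC'
  exact (Set.disjoint_right.1 h' hxC' (Set.disjoint_right.1 h hxC)).elim

theorem eq_of_disjoint_of_disjoint (hP : IsConvexSplit G P) (hQ : IsConvexSplit G Q)
    (hPQ : P ≠ Q) (hA : A ∈ P) (hA' : A' ∈ P) (hC : C ∈ Q) (hC' : C' ∈ Q)
    (h : Disjoint A C) (h' : Disjoint A' C') : A = A' := by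
  refine ((hP.mem_iff hA).1 hA').elim Eq.symm fun hA'c => ?_
  subst hA'c
  rcases (hQ.mem_iff hC).1 hC' with rfl | rfl
  · obtain ⟨x, hx⟩ := hQ.nonempty hC
    exact absurd (Set.disjoint_right.1 h hx) (Set.disjoint_right.1 h' hx)
  · have hAC : A = Cᶜ := (Set.subset_compl_iff_disjoint_right.2 h).antisymm
      (Set.compl_subset_comm.1 (compl_compl C ▸ Set.subset_compl_iff_disjoint_right.2 h'))
    exact (hPQ (by rw [hP.eq_pair_compl hA, hQ.eq_pair_compl hC, hAC, compl_compl,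
      Set.pair_comm])).elim

end IsConvexSplit

abbrev ConvexSplit (G : SimpleGraph V) := {P : Set (Set V) // IsConvexSplit G P}

theorem incGraph_adj_iff {P Q : ConvexSplit G} :
    (IncGraph G).Adj P Q ↔ P ≠ Q ∧ SplitsIncompatible P.1 Q.1 := by
  rw [IncGraph, fromRel_adj, or_iff_left_of_imp SplitsIncompatible.symm]

namespace IsMedianGraph

variable {a b u v : V}

theorem subset_halfspace (hG : IsMedianGraph G) (hab : G.Adj a b) {A : Set V}
    (hA : IsConvexSet G A) (ha : a ∈ A) (hb : b ∉ A) : A ⊆ halfspace G a b := by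
  intro x hx
  by_contra hxW
  refine hb (hA x hx a ha ?_)
  rw [mem_gInterval, G.dist_comm (u := b), dist_eq_one_iff_adj.2 hab]
  exact ((hG.notMem_halfspace_iff hab).1 hxW).symm

def edgeSplit (hG : IsMedianGraph G) (hab : G.Adj a b) : ConvexSplit G :=
  ⟨{halfspace G a b, halfspace G b a}, by
    refine isConvexSplit_iff.2 ⟨halfspace G a b, ?_, ⟨a, self_mem_halfspace hab⟩, ?_,
      hG.isConvexSet_halfspace hab, ?_⟩ <;> rw [hG.compl_halfspace hab]
    exacts [⟨b, self_mem_halfspace hab.symm⟩, hG.isConvexSet_halfspace hab.symm]⟩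

theorem separates_edgeSplit_iff (hG : IsMedianGraph G) (hab : G.Adj a b) {x y : V} :
    Separates (hG.edgeSplit hab).1 x y ↔ (x ∈ halfspace G a b ↔ y ∉ halfspace G a b) :=
  (hG.edgeSplit hab).2.separates_iff (.inl rfl)

theorem separates_edgeSplit_of_dist_lt (hG : IsMedianGraph G) (hab : G.Adj a b)
    (h : G.dist b v < G.dist a v) : Separates (hG.edgeSplit hab).1 a v := by
  refine ⟨halfspace G a b, .inl rfl, self_mem_halfspace hab, ?_⟩
  rw [mem_halfspace, G.dist_comm (u := v), G.dist_comm (u := v)]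
  omega

theorem eq_edgeSplit_of_separates (hG : IsMedianGraph G) (hab : G.Adj a b) {P : ConvexSplit G}
    (h : Separates P.1 a b) : P = hG.edgeSplit hab := by
  obtain ⟨A, hA, ha, hb⟩ := h
  have h₁ := hG.subset_halfspace hab (P.2.isConvexSet hA) ha hb
  have h₂ := hG.subset_halfspace hab.symm (P.2.isConvexSet (P.2.compl_mem hA)) hb (not_not.2 ha)
  rw [← hG.compl_halfspace hab, Set.compl_subset_compl] at h₂
  apply Subtype.ext
  rw [P.2.eq_pair_compl hA, h₁.antisymm h₂, hG.compl_halfspace hab]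
  rfl

theorem exists_separates_of_ne (hG : IsMedianGraph G) (hne : u ≠ v) :
    ∃ P : ConvexSplit G, Separates P.1 u v := by
  obtain ⟨w, huw, hd⟩ := hG.1.exists_adj_dist_add_one hne
  exact ⟨_, hG.separates_edgeSplit_of_dist_lt huw (by omega)⟩

theorem exists_ne_separates_of_not_adj (hG : IsMedianGraph G) (hne : u ≠ v)
    (hnadj : ¬ G.Adj u v) :
    ∃ P Q : ConvexSplit G, P ≠ Q ∧ Separates P.1 u v ∧ Separates Q.1 u v := by
  obtain ⟨w, huw, hd⟩ := hG.1.exists_adj_dist_add_one hne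
  have hwv : w ≠ v := by
    rintro rfl
    exact hnadj huw
  obtain ⟨Q, hQ⟩ := hG.exists_separates_of_ne hwv
  have hQE : Q ≠ hG.edgeSplit huw := by
    rintro rfl
    rw [hG.separates_edgeSplit_iff] at hQ
    have : ¬ G.dist v u < G.dist v w := by
      rw [G.dist_comm (u := v), G.dist_comm (u := v)]
      omega
    exact notMem_halfspace_self (hQ.2 this)
  refine ⟨_, Q, hQE.symm, hG.separates_edgeSplit_of_dist_lt huw (by omega), ?_⟩
  have : ¬ Separates Q.1 w u := fun h =>
    hQE (hG.eq_edgeSplit_of_separates huw ((Q.2.separates_comm).1 h))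
  rw [Q.2.separates_iff_xor w]
  tauto

theorem adj_iff_exists_separates_eq_singleton (hG : IsMedianGraph G) :
    G.Adj u v ↔ ∃ P : ConvexSplit G, {Q : ConvexSplit G | Separates Q.1 u v} = {P} := by
  constructor
  · intro huv
    refine ⟨hG.edgeSplit huv, Set.eq_singleton_iff_unique_mem.2 ⟨?_, fun Q hQ =>
      hG.eq_edgeSplit_of_separates huv hQ⟩⟩
    exact ⟨_, .inl rfl, self_mem_halfspace huv, notMem_halfspace_self⟩
  · rintro ⟨P, hP⟩
    obtain ⟨hPsep, huniq⟩ := Set.eq_singleton_iff_unique_mem.1 hP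
    by_contra hnadj
    have hne : u ≠ v := by
      rintro rfl
      exact not_separates_self hPsep
    obtain ⟨Q, Q', hQQ', hQ, hQ'⟩ := hG.exists_ne_separates_of_not_adj hne hnadj
    exact hQQ' ((huniq Q hQ).trans (huniq Q' hQ').symm)

end IsMedianGraph

def CompatibleSplitsConnected (G : SimpleGraph V) : Prop :=
  ∀ P Q Q' : ConvexSplit G, P ≠ Q → P ≠ Q' → ¬ SplitsIncompatible P.1 Q.1 →
    ¬ SplitsIncompatible P.1 Q'.1 →
    ∃ p : (IncGraph G).Walk Q Q', ∀ t ∈ p.support, ¬ SplitsIncompatible t.1 P.1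

theorem compatibleSplitsConnected_of_induced_paths
    (hpath : ∀ s0 s1 s2 : ConvexSplit G, s0 ≠ s1 → s0 ≠ s2 → s1 ≠ s2 →
      ¬ SplitsIncompatible s0.1 s1.1 → ¬ SplitsIncompatible s0.1 s2.1 →
      ¬ SplitsIncompatible s1.1 s2.1 →
      ∃ p : (IncGraph G).Walk s1 s2, IsInducedPath p ∧
        ∀ t ∈ p.support, ¬ SplitsIncompatible t.1 s0.1) :
    CompatibleSplitsConnected G := by
  intro P Q Q' hQ hQ' hPQ hPQ'
  by_cases hQQ' : Q = Q'
  · subst hQQ'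
    exact ⟨.nil, by simpa using fun h => hPQ h.symm⟩
  by_cases hinc : SplitsIncompatible Q.1 Q'.1
  · refine ⟨.cons (incGraph_adj_iff.2 ⟨hQQ', hinc⟩) .nil, ?_⟩
    simp only [Walk.support_cons, Walk.support_nil, List.mem_cons, List.not_mem_nil, or_false,
      forall_eq_or_imp, forall_eq]
    exact ⟨fun h => hPQ h.symm, fun h => hPQ' h.symm⟩
  obtain ⟨p, -, hp⟩ := hpath P Q Q' hQ hQ' hQQ' hPQ hPQ' hinc
  exact ⟨p, hp⟩

theorem exists_disjoint_of_walk {P Q Q' : ConvexSplit G} (p : (IncGraph G).Walk Q Q')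
    (hp : ∀ t ∈ p.support, ¬ SplitsIncompatible t.1 P.1) (hQ : Q ≠ P) {A : Set V}
    (hA : A ∈ P.1) (hAQ : ∃ C ∈ Q.1, Disjoint A C) : ∃ C ∈ Q'.1, Disjoint A C := by
  induction p with
  | nil => exact hAQ
  | @cons Q t Q' hQt p ih =>
    simp only [Walk.support_cons, List.mem_cons, forall_eq_or_imp] at hp
    have hinc := (incGraph_adj_iff.1 hQt).2
    have htP : t ≠ P := by
      rintro rfl
      exact hp.1 hinc
    obtain ⟨C, hC, hAC⟩ := hAQ
    obtain ⟨C', hC', A', hA', hC'A'⟩ :=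
      not_splitsIncompatible_iff.1 (hp.2 t (Walk.start_mem_support p))
    obtain rfl := P.2.eq_of_disjoint_of_splitsIncompatible hinc hA hA' hC hC' hAC hC'A'.symm
    exact ih hp.2 htP ⟨C', hC', hC'A'.symm⟩

theorem exists_mem_forall_disjoint_compl (hc : CompatibleSplitsConnected G) (P : ConvexSplit G) :
    ∃ X ∈ P.1, ∀ Q : ConvexSplit G, P ≠ Q → ¬ SplitsIncompatible P.1 Q.1 →
      ∃ C ∈ Q.1, Disjoint Xᶜ C := by
  by_cases h : ∃ Q₀ : ConvexSplit G, P ≠ Q₀ ∧ ¬ SplitsIncompatible P.1 Q₀.1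
  · obtain ⟨Q₀, hQ₀, hPQ₀⟩ := h
    obtain ⟨A, hA, C, hC, hAC⟩ := not_splitsIncompatible_iff.1 hPQ₀
    refine ⟨Aᶜ, P.2.compl_mem hA, fun Q hQ hPQ => ?_⟩
    obtain ⟨p, hp⟩ := hc P Q₀ Q hQ₀ hQ hPQ₀ hPQ
    rw [compl_compl]
    exact exists_disjoint_of_walk p hp hQ₀.symm hA ⟨C, hC, hAC⟩
  · obtain ⟨X, hX⟩ := P.2.exists_mem
    exact ⟨X, hX, fun Q hQ hPQ => (h ⟨Q, hQ, hPQ⟩).elim⟩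

def IsBasepoint (G : SimpleGraph V) (v₀ : V) : Prop :=
  ∀ v, (IncGraph G).IsClique {P : ConvexSplit G | Separates P.1 v₀ v}

theorem IsMedianGraph.exists_isBasepoint [Finite V] (hG : IsMedianGraph G)
    (hc : CompatibleSplitsConnected G) : ∃ v₀, IsBasepoint G v₀ := by
  choose X hXP hX using exists_mem_forall_disjoint_compl hc
  have : Fintype (ConvexSplit G) := Fintype.ofFinite _
  obtain ⟨v₀, hv₀⟩ := hG.helly_theorem Finset.univ X (fun P _ => P.2.isConvexSet (hXP P))
    fun P _ Q _ => by
      by_cases hPQ : P = Q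
      · subst hPQ
        simpa using P.2.nonempty (hXP P)
      by_cases hinc : SplitsIncompatible P.1 Q.1
      · exact hinc _ (hXP P) _ (hXP Q)
      rw [← Set.not_disjoint_iff_nonempty_inter]
      intro hdisj
      obtain ⟨C, hC, hXC⟩ := hX P Q hPQ hinc
      exact P.2.ne_compl (hXP P) (P.2.eq_of_disjoint_of_disjoint Q.2 (Subtype.coe_ne_coe.2 hPQ)
        (hXP P) (P.2.compl_mem (hXP P)) (hXP Q) hC hdisj hXC)
  have hv₀X (P : ConvexSplit G) (v : V) (hP : Separates P.1 v₀ v) : v ∈ (X P)ᶜ :=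
    fun hv => (P.2.separates_iff (hXP P)).1 hP |>.1 (hv₀ P (Finset.mem_univ P)) hv
  refine ⟨v₀, fun v P hP Q hQ hPQ => incGraph_adj_iff.2 ⟨hPQ, ?_⟩⟩
  by_contra hinc
  obtain ⟨C, hC, hPC⟩ := hX P Q hPQ hinc
  obtain ⟨D, hD, hQD⟩ := hX Q P hPQ.symm (fun h => hinc h.symm)
  obtain rfl : (X Q)ᶜ = C := Q.2.eq_of_disjoint_of_disjoint P.2 (Subtype.coe_ne_coe.2 hPQ.symm)
    (Q.2.compl_mem (hXP Q)) hC hD (P.2.compl_mem (hXP P)) hQD hPC.symm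
  exact Set.disjoint_left.1 hPC (hv₀X P v hP) (hv₀X Q v hQ)

theorem IsBasepoint.exists_eq_setOf_separates [Finite V] {v₀ : V} (hv₀ : IsBasepoint G v₀)
    (hG : IsMedianGraph G) {C : Set (ConvexSplit G)} (hC : (IncGraph G).IsClique C) :
    ∃ v, {P : ConvexSplit G | Separates P.1 v₀ v} = C := by
  have : Fintype (ConvexSplit G) := Fintype.ofFinite _
  set Y : ConvexSplit G → Set V := fun P => {v | Separates P.1 v₀ v ↔ P ∈ C}
  have hY (P : ConvexSplit G) : Y P ∈ P.1 := P.2.setOf_separates_iff_mem v₀ (P ∈ C)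
  have hmixed (P Q : ConvexSplit G) (hPQ : P ≠ Q) (hinc : ¬ SplitsIncompatible P.1 Q.1)
      (hPC : P ∈ C) : (Y P ∩ Y Q).Nonempty := by
    have hQC : Q ∉ C := fun hQC => hinc (incGraph_adj_iff.1 (hC hPC hQC hPQ)).2
    obtain ⟨v, hvP⟩ := P.2.nonempty (hY P)
    refine ⟨v, hvP, ?_⟩
    by_contra hvQ
    have hsep : Separates P.1 v₀ v ∧ Separates Q.1 v₀ v := by
      simp only [Y, Set.mem_ofPred_eq] at hvP hvQ
      tauto
    exact hinc (incGraph_adj_iff.1 (hv₀ v hsep.1 hsep.2 hPQ)).2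
  obtain ⟨v, hv⟩ := hG.helly_theorem Finset.univ Y (fun P _ => P.2.isConvexSet (hY P))
    fun P _ Q _ => by
      by_cases hPQ : P = Q
      · subst hPQ
        simpa using P.2.nonempty (hY P)
      by_cases hinc : SplitsIncompatible P.1 Q.1
      · exact hinc _ (hY P) _ (hY Q)
      by_cases hPC : P ∈ C
      · exact hmixed P Q hPQ hinc hPC
      by_cases hQC : Q ∈ C
      · exact Set.inter_comm _ _ ▸ hmixed Q P (Ne.symm hPQ) (fun h => hinc h.symm) hQC
      exact ⟨v₀, by simp [Y, hPC, hQC, not_separates_self]⟩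
  exact ⟨v, Set.ext fun P => hv P (Finset.mem_univ P)⟩

theorem Set.exists_insert_eq_or_iff_symmDiff_eq_singleton {α : Type*} {s t : Set α} :
    ((∃ a ∉ s, t = insert a s) ∨ ∃ a ∉ t, s = insert a t) ↔ ∃ a, symmDiff s t = {a} := by
  constructor
  · rintro (⟨a, ha, rfl⟩ | ⟨a, ha, rfl⟩) <;> refine ⟨a, Set.ext fun x => ?_⟩ <;>
      by_cases hx : x = a <;> simp_all [Set.mem_symmDiff]
  · rintro ⟨a, h⟩
    have hmem (x : α) : (x ∈ s ∧ x ∉ t ∨ x ∈ t ∧ x ∉ s) ↔ x = a := by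
      rw [← Set.mem_symmDiff, h, Set.mem_singleton_iff]
    have ha := hmem a
    by_cases has : a ∈ s
    · refine .inr ⟨a, by tauto, Set.ext fun x => ?_⟩
      have hx := hmem x
      rcases eq_or_ne x a with rfl | hxa <;> rw [Set.mem_insert_iff] <;> tauto
    · refine .inl ⟨a, has, Set.ext fun x => ?_⟩
      have hx := hmem x
      rcases eq_or_ne x a with rfl | hxa <;> rw [Set.mem_insert_iff] <;> tauto

theorem simplexGraph_adj_iff {α : Type} {F : SimpleGraph α}
    {s t : {s : Finset α // F.IsClique (s : Set α)}} :
    (simplexGraph F).Adj s t ↔ ∃ a, symmDiff (s.1 : Set α) t.1 = {a} := by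
  rw [simplexGraph, fromRel_adj, ← Set.exists_insert_eq_or_iff_symmDiff_eq_singleton]
  refine ⟨fun h => h.2, fun h => ⟨?_, h⟩⟩
  rintro rfl
  rcases h with ⟨a, ha, h⟩ | ⟨a, ha, h⟩ <;> exact ha (h ▸ Set.mem_insert a _)

noncomputable def separatingSplits [Finite V] (G : SimpleGraph V) (u v : V) :
    Finset (ConvexSplit G) :=
  (Set.toFinite {P : ConvexSplit G | Separates P.1 u v}).toFinset

theorem coe_separatingSplits [Finite V] (u v : V) :
    (separatingSplits G u v : Set (ConvexSplit G)) = {P | Separates P.1 u v} :=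
  Set.Finite.coe_toFinset _

theorem symmDiff_separatingSplits [Finite V] (w u v : V) :
    symmDiff (separatingSplits G w u : Set (ConvexSplit G)) (separatingSplits G w v) =
      {P | Separates P.1 u v} := by
  ext P
  simp only [coe_separatingSplits, Set.mem_symmDiff, Set.mem_ofPred_eq]
  rw [P.2.separates_iff_xor (u := u) (v := v) w]
  tauto

theorem IsBasepoint.nonempty_iso_simplexGraph [Finite V] {v₀ : V} (hv₀ : IsBasepoint G v₀)
    (hG : IsMedianGraph G) : Nonempty (G ≃g simplexGraph (IncGraph G)) := by
  let Φ (v : V) : {s : Finset (ConvexSplit G) // (IncGraph G).IsClique (s : Set _)} :=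
    ⟨separatingSplits G v₀ v, coe_separatingSplits (G := G) v₀ v ▸ hv₀ v⟩
  have hΦ_adj (u v : V) : (simplexGraph (IncGraph G)).Adj (Φ u) (Φ v) ↔ G.Adj u v := by
    rw [simplexGraph_adj_iff, symmDiff_separatingSplits,
      hG.adj_iff_exists_separates_eq_singleton]
  have hΦ_inj : Function.Injective Φ := by
    intro u v h
    by_contra hne
    obtain ⟨P, hP⟩ := hG.exists_separates_of_ne hne
    have := symmDiff_separatingSplits (G := G) v₀ u v
    rw [show separatingSplits G v₀ u = separatingSplits G v₀ v from congrArg Subtype.val h,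
      symmDiff_self] at this
    exact (this.symm ▸ hP : P ∈ (⊥ : Set (ConvexSplit G)))
  have hΦ_surj : Function.Surjective Φ := by
    rintro ⟨s, hs⟩
    obtain ⟨v, hv⟩ := hv₀.exists_eq_setOf_separates hG hs
    exact ⟨v, Subtype.ext (Finset.coe_injective ((coe_separatingSplits v₀ v).trans hv))⟩
  exact ⟨⟨Equiv.ofBijective Φ ⟨hΦ_inj, hΦ_surj⟩, hΦ_adj _ _⟩⟩

/-- Let `G` be a finite median graph such that for every three pairwise
distinct, pairwise compatible convex splits `s0, s1, s2` there is an induced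
path in `Inc(G)` from `s1` to `s2` containing no split incompatible with `s0`.
Then `G` is a simplex graph: there is a finite graph `F` with `G ≅ κ(F)` and
`Inc(G) ≅ F`. -/
theorem median_is_simplexGraph_of_induced_paths {V : Type} [Fintype V]
    (G : SimpleGraph V) (hG : IsMedianGraph G)
    (hpath : ∀ s0 s1 s2 : {P : Set (Set V) // IsConvexSplit G P},
      s0 ≠ s1 → s0 ≠ s2 → s1 ≠ s2 →
      ¬ SplitsIncompatible s0.1 s1.1 → ¬ SplitsIncompatible s0.1 s2.1 →
      ¬ SplitsIncompatible s1.1 s2.1 →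
      ∃ p : (IncGraph G).Walk s1 s2, IsInducedPath p ∧
        ∀ t ∈ p.support, ¬ SplitsIncompatible t.1 s0.1) :
    ∃ (α : Type) (F : SimpleGraph α), Finite α ∧
      Nonempty (G ≃g simplexGraph F) ∧ Nonempty (IncGraph G ≃g F) := by
  obtain ⟨v₀, hv₀⟩ := hG.exists_isBasepoint (compatibleSplitsConnected_of_induced_paths hpath)
  exact ⟨ConvexSplit G, IncGraph G, inferInstance, hv₀.nonempty_iso_simplexGraph hG,
    ⟨Iso.refl⟩⟩
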